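/- Let H be a real Hilbert space, K ⊆ H weakly compact and convex, and f : K → H with f(K) ⊆ K. Assume f is continuous on finite-dimensional subspaces and ‖x − y‖² ≥ ⟨f(x) − f(y), x − y⟩ for all x, y ∈ K. Then f has a fixed point. -/

import Mathlib

/-!
Put `g x = x - f x`; the hypothesis says that `g` is a monotone operator on `K`. For finitely many
points `pᵢ ∈ K`, a minimax argument on the simplex (Hahn–Banach separation in `ℝⁿ`) produces
`x ∈ K` with `⟪g pᵢ, pᵢ - x⟫ ≥ 0` for all `i`. The half-spaces `{x | ⟪g y, y - x⟫ ≥ 0}` are closed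
and convex, hence weakly closed, so weak compactness of `K` yields a Minty point `x₀ ∈ K` with
`⟪g y, y - x₀⟫ ≥ 0` for every `y ∈ K`. Testing this at `y = x₀ + t (w - x₀)` and letting `t → 0`
inside the finite-dimensional span of `x₀` and `w` gives `⟪g x₀, w - x₀⟫ ≥ 0`; for `w = f x₀`
this says `-‖x₀ - f x₀‖² ≥ 0`.
-/

open Filter Topology RealInnerProductSpace

/-- Weak convergence of a sequence: tested against all continuous linear functionals. -/
def WeakConv {X : Type*} [NormedAddCommGroup X] [NormedSpace ℝ X] (u : ℕ → X) (x : X) : Prop :=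
  ∀ φ : X →L[ℝ] ℝ, Filter.Tendsto (fun n => φ (u n)) Filter.atTop (nhds (φ x))

/-- A set is weakly compact: its copy in the weak space is compact. -/
def WeaklyCompact {X : Type*} [NormedAddCommGroup X] [NormedSpace ℝ X] (S : Set X) : Prop :=
  IsCompact (_root_.toWeakSpaceCLM ℝ X '' S)

open Finset Matrix in
theorem Matrix.exists_mem_stdSimplex_mulVec_nonneg {ι : Type*} [Fintype ι] [Nonempty ι]
    (M : Matrix ι ι ℝ) (h : ∀ μ ∈ stdSimplex ℝ ι, 0 ≤ μ ⬝ᵥ M *ᵥ μ) :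
    ∃ μ ∈ stdSimplex ℝ ι, 0 ≤ M *ᵥ μ := by
  classical
  by_contra! hneg
  have hdisj : Disjoint (M.mulVecLin '' stdSimplex ℝ ι) (Set.Ici 0) := by
    rw [Set.disjoint_left]
    rintro _ ⟨μ, hμ, rfl⟩
    exact hneg μ hμ
  obtain ⟨φ, u, v, hφM, huv, hφP⟩ := geometric_hahn_banach_compact_closed
    ((convex_stdSimplex ℝ ι).linear_image M.mulVecLin)
    ((isCompact_stdSimplex ℝ ι).image M.mulVecLin.continuous_of_finiteDimensional)
    (convex_Ici 0) isClosed_Ici hdisj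
  set y := (dotProductEquiv ℝ ι).symm φ.toLinearMap
  have hφ : ∀ a, φ a = y ⬝ᵥ a := fun a =>
    (LinearMap.congr_fun ((dotProductEquiv ℝ ι).apply_symm_apply φ.toLinearMap) a).symm
  have hv : v < 0 := by simpa using hφP 0 Set.self_mem_Ici
  -- `φ` is bounded below on the cone `Ici 0`, hence nonnegative on it
  have hy : 0 ≤ y := fun i => by
    by_contra! hyi
    have hmem : (v / y i) • Pi.single i (1 : ℝ) ∈ Set.Ici 0 :=
      Set.mem_Ici.mpr <| smul_nonneg (div_nonneg_of_nonpos hv.le hyi.le) (by simp)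
    have := hφP _ hmem
    rw [hφ, dotProduct_smul, dotProduct_single, smul_eq_mul, mul_one,
      div_mul_cancel₀ _ hyi.ne] at this
    exact this.false
  have hy_sum : 0 < ∑ i, y i := Fintype.sum_pos <| hy.lt_of_ne' fun hy0 => by
    have := hφM _ ⟨_, single_mem_stdSimplex ℝ (Classical.arbitrary ι), rfl⟩
    rw [hφ, hy0, zero_dotProduct] at this
    linarith
  -- the normalised separating functional is a point of the simplex where the form is negative
  set μ := (∑ i, y i)⁻¹ • y
  have hμ : μ ∈ stdSimplex ℝ ι :=
    ⟨fun i => mul_nonneg (inv_nonneg.mpr hy_sum.le) (hy i), by simp [μ, ← mul_sum, hy_sum.ne']⟩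
  have hφμ := hφM _ ⟨μ, hμ, rfl⟩
  rw [hφ, mulVecLin_apply] at hφμ
  have := h μ hμ
  rw [smul_dotProduct, smul_eq_mul] at this
  nlinarith [inv_pos.mpr hy_sum]

section NormedSpace

variable {X : Type*} [NormedAddCommGroup X] [NormedSpace ℝ X]

theorem Convex.isClosed_toWeakSpace_image {s : Set X} (hs : Convex ℝ s) (hc : IsClosed s) :
    IsClosed (toWeakSpace ℝ X '' s) := by
  rw [← hc.closure_eq, hs.toWeakSpace_closure ℝ]
  exact isClosed_closure

theorem WeakConv.sub {u v : ℕ → X} {x y : X}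
    (hu : WeakConv u x) (hv : WeakConv v y) : WeakConv (fun n => u n - v n) (x - y) :=
  fun φ => by simpa only [map_sub] using (hu φ).sub (hv φ)

theorem Filter.Tendsto.weakConv {u : ℕ → X} {x : X} (hu : Tendsto u atTop (𝓝 x)) : WeakConv u x :=
  fun φ => (φ.continuous.tendsto x).comp hu

theorem tendsto_add_inv_succ_smul (x v : X) :
    Tendsto (fun n : ℕ => x + ((n : ℝ) + 1)⁻¹ • v) atTop (𝓝 x) := by
  simpa using tendsto_const_nhds.add
    ((tendsto_one_div_add_atTop_nhds_zero_nat (𝕜 := ℝ)).smul_const v)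

def FinDimContinuousOn (f : X → X) (K : Set X) : Prop :=
  ∀ M : Submodule ℝ X, FiniteDimensional ℝ M →
    ∀ (u : ℕ → X) (x : X), (∀ n, u n ∈ K ∩ (M : Set X)) → x ∈ K ∩ (M : Set X) →
      Tendsto u atTop (𝓝 x) → WeakConv (fun n => f (u n)) (f x)

theorem FinDimContinuousOn.weakConv_segment {f : X → X} {K : Set X}
    (hf : FinDimContinuousOn f K) (hK : Convex ℝ K) {x w : X} (hx : x ∈ K) (hw : w ∈ K) :
    WeakConv (fun n : ℕ => f (x + ((n : ℝ) + 1)⁻¹ • (w - x))) (f x) := by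
  have hxM : x ∈ Submodule.span ℝ {x, w} := Submodule.subset_span (Set.mem_insert _ _)
  have hwM : w ∈ Submodule.span ℝ {x, w} := Submodule.subset_span (Set.mem_insert_of_mem _ rfl)
  refine hf _ (FiniteDimensional.span_of_finite ℝ (Set.toFinite _)) _ x (fun n => ⟨?_, ?_⟩)
    ⟨hx, hxM⟩ (tendsto_add_inv_succ_smul x (w - x))
  · exact hK.add_smul_sub_mem hx hw ⟨by positivity, inv_le_one_of_one_le₀ (by simp)⟩
  · exact add_mem hxM (Submodule.smul_mem _ _ (sub_mem hwM hxM))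

end NormedSpace

section MonotoneOperator

variable {E : Type*} [NormedAddCommGroup E] [InnerProductSpace ℝ E]

def MonotoneOperatorOn (g : E → E) (K : Set E) : Prop :=
  ∀ x ∈ K, ∀ y ∈ K, 0 ≤ ⟪g x - g y, x - y⟫

theorem monotoneOperatorOn_sub_of_inner_le {f : E → E} {K : Set E}
    (hf : ∀ x ∈ K, ∀ y ∈ K, ⟪f x - f y, x - y⟫ ≤ ‖x - y‖ ^ 2) :
    MonotoneOperatorOn (fun x => x - f x) K := fun x hx y hy => by
  have hxy : x - f x - (y - f y) = (x - y) - (f x - f y) := by abel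
  rw [hxy, inner_sub_left, real_inner_self_eq_norm_sq]
  linarith [hf x hx y hy]

open Finset Matrix in
theorem MonotoneOperatorOn.exists_forall_inner_nonneg_of_fintype {g : E → E} {K : Set E}
    (hg : MonotoneOperatorOn g K) (hK : Convex ℝ K) (hne : K.Nonempty)
    {ι : Type*} [Fintype ι] (p : ι → E) (hp : ∀ i, p i ∈ K) :
    ∃ x ∈ K, ∀ i, 0 ≤ ⟪g (p i), p i - x⟫ := by
  cases isEmpty_or_nonempty ι
  · exact ⟨hne.some, hne.some_mem, isEmptyElim⟩
  set M : Matrix ι ι ℝ := of fun i j => ⟪g (p i), p i - p j⟫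
  have hmem : ∀ μ ∈ stdSimplex ℝ ι, ∑ j, μ j • p j ∈ K := fun μ hμ =>
    hK.sum_mem (fun j _ => hμ.1 j) hμ.2 fun j _ => hp j
  have hMμ : ∀ μ ∈ stdSimplex ℝ ι, ∀ i, (M *ᵥ μ) i = ⟪g (p i), p i - ∑ j, μ j • p j⟫ :=
    fun μ hμ i => by
      simp [M, mulVec, dotProduct, inner_sub_right, inner_sum, real_inner_smul_right, mul_sub,
        sum_sub_distrib, ← sum_mul, hμ.2, mul_comm]
  obtain ⟨μ, hμ, hMμ_nonneg⟩ := M.exists_mem_stdSimplex_mulVec_nonneg fun μ hμ => by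
    set x := ∑ j, μ j • p j
    -- monotonicity lets us replace each `g (p i)` by `g x`, and the result averages to zero
    calc 0 = ⟪g x, ∑ i, μ i • (p i - x)⟫ := by
          simp [smul_sub, sum_sub_distrib, ← sum_smul, hμ.2, x]
      _ = ∑ i, μ i * ⟪g x, p i - x⟫ := by simp [inner_sum, real_inner_smul_right]
      _ ≤ ∑ i, μ i * (M *ᵥ μ) i := sum_le_sum fun i _ => by
          refine mul_le_mul_of_nonneg_left ?_ (hμ.1 i)
          have := hg (p i) (hp i) x (hmem μ hμ)
          rw [hMμ μ hμ, inner_sub_left] at *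
          linarith
  exact ⟨_, hmem μ hμ, fun i => (hMμ μ hμ i).symm ▸ hMμ_nonneg i⟩

theorem MonotoneOperatorOn.exists_forall_inner_nonneg {g : E → E} {K : Set E}
    (hg : MonotoneOperatorOn g K) (hK : Convex ℝ K) (hne : K.Nonempty) (hKc : WeaklyCompact K) :
    ∃ x₀ ∈ K, ∀ y ∈ K, 0 ≤ ⟪g y, y - x₀⟫ := by
  set T := toWeakSpace ℝ E
  set A : K → Set E := fun y => {x | ⟪g y, x⟫ ≤ ⟪g y, (y : E)⟫}
  have hA : ∀ y x, x ∈ A y ↔ 0 ≤ ⟪g y, y - x⟫ := fun y x => by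
    simp only [A, Set.mem_ofPred_eq, inner_sub_right, sub_nonneg]
  have hAc : ∀ y, IsClosed (T '' A y) := fun y =>
    (convex_halfSpace_le (innerₛₗ ℝ (g y)).isLinear _).isClosed_toWeakSpace_image
      (isClosed_le (continuous_const.inner continuous_id) continuous_const)
  obtain ⟨_, ⟨x₀, hx₀, rfl⟩, hx₀A⟩ := IsCompact.inter_iInter_nonempty
    (by simpa [WeaklyCompact] using hKc) (fun y => T '' A y) hAc fun u => by
      obtain ⟨x, hx, hxu⟩ := hg.exists_forall_inner_nonneg_of_fintype hK hne
        (fun y : u => (y : E)) fun y => y.1.2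
      exact ⟨T x, Set.mem_image_of_mem T hx, Set.mem_iInter₂.mpr fun y hy =>
        Set.mem_image_of_mem T ((hA y x).mpr (hxu ⟨y, hy⟩))⟩
  exact ⟨x₀, hx₀, fun y hy => (hA ⟨y, hy⟩ x₀).mp
    (T.injective.mem_set_image.mp (Set.mem_iInter.mp hx₀A ⟨y, hy⟩))⟩

theorem inner_nonneg_of_minty {g : E → E} {K : Set E} (hK : Convex ℝ K)
    {x₀ w : E} (hx₀ : x₀ ∈ K) (hw : w ∈ K) (hminty : ∀ y ∈ K, 0 ≤ ⟪g y, y - x₀⟫)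
    (hg : WeakConv (fun n : ℕ => g (x₀ + ((n : ℝ) + 1)⁻¹ • (w - x₀))) (g x₀)) :
    0 ≤ ⟪g x₀, w - x₀⟫ := by
  rw [real_inner_comm]
  refine ge_of_tendsto (hg (innerSL ℝ (w - x₀))) (Eventually.of_forall fun n => ?_)
  have ht : ((n : ℝ) + 1)⁻¹ ∈ Set.Icc (0 : ℝ) 1 := ⟨by positivity, inv_le_one_of_one_le₀ (by simp)⟩
  have := hminty _ (hK.add_smul_sub_mem hx₀ hw ht)
  rw [add_sub_cancel_left, real_inner_smul_right, real_inner_comm] at this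
  exact nonneg_of_mul_nonneg_right this (by positivity)

end MonotoneOperator

theorem stmt14_general {H : Type*} [NormedAddCommGroup H] [InnerProductSpace ℝ H]
    (K : Set H) (hne : K.Nonempty) (f : H → H)
    (hK : WeaklyCompact K) (hconv : Convex ℝ K) (hfK : f '' K ⊆ K)
    (hcont : ∀ M : Submodule ℝ H, FiniteDimensional ℝ M →
      ∀ (u : ℕ → H) (x : H), (∀ n, u n ∈ K ∩ (M : Set H)) → x ∈ K ∩ (M : Set H) →
        Filter.Tendsto u Filter.atTop (nhds x) → WeakConv (fun n => f (u n)) (f x))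
    (hmono : ∀ x ∈ K, ∀ y ∈ K, ⟪f x - f y, x - y⟫ ≤ ‖x - y‖ ^ 2) :
    ∃ x ∈ K, f x = x := by
  obtain ⟨x₀, hx₀, hminty⟩ :=
    (monotoneOperatorOn_sub_of_inner_le hmono).exists_forall_inner_nonneg hconv hne hK
  have hfx₀ : f x₀ ∈ K := hfK ⟨x₀, hx₀, rfl⟩
  have hvi : 0 ≤ ⟪x₀ - f x₀, f x₀ - x₀⟫ :=
    inner_nonneg_of_minty hconv hx₀ hfx₀ hminty
      ((tendsto_add_inv_succ_smul _ _).weakConv.sub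
        (FinDimContinuousOn.weakConv_segment hcont hconv hx₀ hfx₀))
  rw [← neg_sub, inner_neg_left, real_inner_self_eq_norm_sq, neg_nonneg, sq_nonpos_iff,
    norm_eq_zero, sub_eq_zero] at hvi
  exact ⟨x₀, hx₀, hvi⟩

theorem stmt14 {H : Type*} [NormedAddCommGroup H] [InnerProductSpace ℝ H] [CompleteSpace H]
    (K : Set H) (hne : K.Nonempty) (f : H → H)
    (hK : WeaklyCompact K) (hconv : Convex ℝ K) (hfK : f '' K ⊆ K)
    (hcont : ∀ M : Submodule ℝ H, FiniteDimensional ℝ M →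
      ∀ (u : ℕ → H) (x : H), (∀ n, u n ∈ K ∩ (M : Set H)) → x ∈ K ∩ (M : Set H) →
        Filter.Tendsto u Filter.atTop (nhds x) → WeakConv (fun n => f (u n)) (f x))
    (hmono : ∀ x ∈ K, ∀ y ∈ K, ⟪f x - f y, x - y⟫ ≤ ‖x - y‖ ^ 2) :
    ∃ x ∈ K, f x = x :=
  stmt14_general K hne f hK hconv hfK hcont hmono
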